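/- arXiv:1909.10132 — 3 statements merged into one kernel-verified Lean document; each statement's English description precedes it below -/
import Mathlib

section
/- Let A_b : ℝ^n → ℝ^b be a linear map and f(x) = (1/(2b)) * ‖y_b - A_b x‖₂². If (1/b) * ‖A_b z‖₂² ≤ (1 + δ) * ‖z‖₂² for all z in a subspace U, then for all x, x' with x - x' ∈ U: f(x') - f(x) - ⟨∇f(x), x' - x⟩ ≤ (1 + δ) * ‖x' - x‖₂². Moreover ⟨x' - x, ∇f(x') - ∇f(x)⟩ ≤ 2*(1+δ) * ‖x' - x‖₂². -/
open scoped RealInnerProductSpace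

/-! A least-squares objective is quadratic, so its first-order Taylor remainder between `x` and
`x'` is exactly `(1/(2b)) ‖A_b (x' - x)‖²`, and pairing the gradient increment with `x' - x` gives
`(1/b) ‖A_b (x' - x)‖²`. Both are controlled by the restricted isometry bound on `U`. -/

section LeastSquares

variable {E F : Type*} [NormedAddCommGroup E] [InnerProductSpace ℝ E] [CompleteSpace E]
  [NormedAddCommGroup F] [InnerProductSpace ℝ F]

def leastSquares (c : ℝ) (A : E →L[ℝ] F) (y : F) (x : E) : ℝ := c * ‖y - A x‖ ^ 2

theorem inner_gradient_leastSquares (c : ℝ) (A : E →L[ℝ] F) (y : F) (x h : E) :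
    ⟪gradient (leastSquares c A y) x, h⟫ = 2 * c * ⟪A x - y, A h⟫ := by
  have hderiv : HasFDerivAt (leastSquares c A y)
      (c • (2 • (innerSL ℝ (y - A x)).comp (-A))) x :=
    (A.hasFDerivAt.const_sub y).norm_sq.const_mul c
  rw [gradient, InnerProductSpace.toDual_symm_apply, hderiv.fderiv]
  simp only [smul_apply, ContinuousLinearMap.comp_apply, innerSL_apply_apply,
    neg_apply, inner_neg_right, smul_eq_mul, nsmul_eq_mul]
  rw [← neg_sub y, inner_neg_left]
  ring

theorem leastSquares_sub_sub_inner_gradient (c : ℝ) (A : E →L[ℝ] F) (y : F) (x x' : E) :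
    leastSquares c A y x' - leastSquares c A y x - ⟪gradient (leastSquares c A y) x, x' - x⟫
      = c * ‖A (x' - x)‖ ^ 2 := by
  have hsplit : y - A x' = (y - A x) - A (x' - x) := by rw [map_sub]; abel
  rw [inner_gradient_leastSquares, leastSquares, leastSquares, hsplit, norm_sub_sq_real,
    ← neg_sub y, inner_neg_left]
  ring

theorem inner_sub_gradient_leastSquares (c : ℝ) (A : E →L[ℝ] F) (y : F) (x x' : E) :
    ⟪x' - x, gradient (leastSquares c A y) x' - gradient (leastSquares c A y) x⟫
      = 2 * c * ‖A (x' - x)‖ ^ 2 := by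
  rw [real_inner_comm, inner_sub_left, inner_gradient_leastSquares, inner_gradient_leastSquares,
    ← mul_sub, ← inner_sub_left, sub_sub_sub_cancel_right, ← map_sub, real_inner_self_eq_norm_sq]

end LeastSquares

theorem stmt_6_general (b n : ℕ) (δ : ℝ)
    (Ab : EuclideanSpace ℝ (Fin n) →ₗ[ℝ] EuclideanSpace ℝ (Fin b))
    (yb : EuclideanSpace ℝ (Fin b))
    (U : Submodule ℝ (EuclideanSpace ℝ (Fin n)))
    (f : EuclideanSpace ℝ (Fin n) → ℝ)
    (hf : f = fun x => (1 / (2 * (b : ℝ))) * ‖yb - Ab x‖ ^ 2)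
    (hTRIP : ∀ z ∈ U, (1 / (b : ℝ)) * ‖Ab z‖ ^ 2 ≤ (1 + δ) * ‖z‖ ^ 2) :
    ∀ x x' : EuclideanSpace ℝ (Fin n), x - x' ∈ U →
      (f x' - f x - ⟪gradient f x, x' - x⟫ ≤ (1 + δ) * ‖x' - x‖ ^ 2) ∧
        ⟪x' - x, gradient f x' - gradient f x⟫ ≤ 2 * (1 + δ) * ‖x' - x‖ ^ 2 := by
  intro x x' hx
  have hf' : f = leastSquares (1 / (2 * (b : ℝ))) (LinearMap.toContinuousLinearMap Ab) yb := hf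
  have hsmooth := hTRIP (x' - x) (sub_mem_comm_iff.mp hx)
  have hnonneg : 0 ≤ (1 / (b : ℝ)) * ‖Ab (x' - x)‖ ^ 2 := by positivity
  have hhalf : 1 / (2 * (b : ℝ)) = 1 / b / 2 := by ring
  subst hf'
  rw [leastSquares_sub_sub_inner_gradient, inner_sub_gradient_leastSquares, hhalf,
    LinearMap.coe_toContinuousLinearMap']
  constructor <;> linarith

theorem stmt_6 (b n : ℕ) (hb : 0 < b) (δ : ℝ) (hδ : 0 ≤ δ)
    (Ab : EuclideanSpace ℝ (Fin n) →ₗ[ℝ] EuclideanSpace ℝ (Fin b))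
    (yb : EuclideanSpace ℝ (Fin b))
    (U : Submodule ℝ (EuclideanSpace ℝ (Fin n)))
    (f : EuclideanSpace ℝ (Fin n) → ℝ)
    (hf : f = fun x => (1 / (2 * (b : ℝ))) * ‖yb - Ab x‖ ^ 2)
    (hTRIP : ∀ z ∈ U, (1 / (b : ℝ)) * ‖Ab z‖ ^ 2 ≤ (1 + δ) * ‖z‖ ^ 2) :
    ∀ x x' : EuclideanSpace ℝ (Fin n), x - x' ∈ U →
      (f x' - f x - ⟪gradient f x, x' - x⟫ ≤ (1 + δ) * ‖x' - x‖ ^ 2) ∧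
        ⟪x' - x, gradient f x' - gradient f x⟫ ≤ 2 * (1 + δ) * ‖x' - x‖ ^ 2 :=
  stmt_6_general b n δ Ab yb U f hf hTRIP
end

section
/- (Co-coercivity on a subspace) Let f : ℝ^n → ℝ be convex and differentiable, U a subspace of ℝ^n, P the orthogonal projection onto U, and ρ > 0. Suppose that for all w₁, w₂ ∈ U (as translates within the affine space through the points considered), f(w₁) - f(w₂) - ⟨∇f(w₂), w₁ - w₂⟩ ≤ (ρ/2) ‖w₁ - w₂‖². Then for all x, x' ∈ U: ‖P(∇f(x') - ∇f(x))‖² ≤ ρ * ⟨x' - x, ∇f(x') - ∇f(x)⟩. -/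
open scoped RealInnerProductSpace

/-!
Write `D(x, y) = f y - f x - ⟪∇f x, y - x⟫` for the Bregman divergence, which is nonnegative by
convexity. For `x, y ∈ U` and `p = P(∇f y - ∇f x)`, the point `w = y - ρ⁻¹ p` lies in `U`, and
the three-point identity together with `0 ≤ D(x, w)` and the smoothness bound on `D(y, w)` gives
`‖p‖² ≤ 2ρ D(x, y)`. Adding this to the same bound with `x` and `y` swapped, and using
`D(x, y) + D(y, x) = ⟪y - x, ∇f y - ∇f x⟫`, gives the claim.
-/

section FirstOrder

variable {E : Type*} [NormedAddCommGroup E] [NormedSpace ℝ E] {s : Set E} {f : E → ℝ}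
  {f' : E →L[ℝ] ℝ} {x y : E}

theorem ConvexOn.apply_sub_le_of_hasFDerivAt (hf : ConvexOn ℝ s f) (hx : x ∈ s) (hy : y ∈ s)
    (hf' : HasFDerivAt f f' x) : f' (y - x) ≤ f y - f x := by
  let φ : ℝ → ℝ := f ∘ AffineMap.lineMap x y
  have hφ : ConvexOn ℝ (AffineMap.lineMap x y ⁻¹' s) φ := hf.comp_affineMap _
  have hφ' : HasDerivAt φ (f' (y - x)) 0 := by
    rw [← AffineMap.lineMap_apply_zero (k := ℝ) x y] at hf'
    exact hf'.comp_hasDerivAt 0 AffineMap.hasDerivAt_lineMap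
  have := hφ.le_slope_of_hasDerivAt (by simpa using hx) (by simpa using hy) zero_lt_one hφ'
  simpa [φ, slope_def_field] using this

end FirstOrder

section Bregman

variable {E : Type*} [NormedAddCommGroup E] [InnerProductSpace ℝ E] [CompleteSpace E]

noncomputable def bregmanDiv (f : E → ℝ) (x y : E) : ℝ :=
  f y - f x - ⟪gradient f x, y - x⟫

variable {f : E → ℝ} {s : Set E} {x y : E}

theorem ConvexOn.bregmanDiv_nonneg (hf : ConvexOn ℝ s f) (hx : x ∈ s) (hy : y ∈ s)
    (hdiff : DifferentiableAt ℝ f x) : 0 ≤ bregmanDiv f x y := by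
  have := hf.apply_sub_le_of_hasFDerivAt hx hy hdiff.hasFDerivAt
  rw [bregmanDiv, inner_gradient_left]
  linarith

theorem bregmanDiv_three_point (f : E → ℝ) (x y w : E) :
    bregmanDiv f x w =
      bregmanDiv f x y + bregmanDiv f y w + ⟪gradient f y - gradient f x, w - y⟫ := by
  simp only [bregmanDiv, inner_sub_left, inner_sub_right]
  ring

theorem bregmanDiv_add_bregmanDiv_swap (f : E → ℝ) (x y : E) :
    bregmanDiv f x y + bregmanDiv f y x = ⟪y - x, gradient f y - gradient f x⟫ := by
  simp only [bregmanDiv, inner_sub_left, inner_sub_right, real_inner_comm]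
  ring

variable {K : Submodule ℝ E} [K.HasOrthogonalProjection] {ρ : ℝ}

theorem norm_sq_starProjection_gradient_sub_le (hρ : 0 < ρ) (hconv : ConvexOn ℝ K f)
    (hdiff : DifferentiableAt ℝ f x)
    (hsmooth : ∀ w₁ ∈ K, ∀ w₂ ∈ K, bregmanDiv f w₂ w₁ ≤ ρ / 2 * ‖w₁ - w₂‖ ^ 2)
    (hx : x ∈ K) (hy : y ∈ K) :
    ‖K.starProjection (gradient f y - gradient f x)‖ ^ 2 ≤ 2 * ρ * bregmanDiv f x y := by
  set p := K.starProjection (gradient f y - gradient f x)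
  set w := y - ρ⁻¹ • p
  have hw : w ∈ K := K.sub_mem hy (K.smul_mem _ (K.starProjection_apply_mem _))
  have hwy : w - y = -(ρ⁻¹ • p) := by simp [w]
  have hnorm : ‖w - y‖ ^ 2 = ρ⁻¹ ^ 2 * ‖p‖ ^ 2 := by
    rw [hwy, norm_neg, norm_smul, Real.norm_of_nonneg (by positivity), mul_pow]
  have hp : ⟪gradient f y - gradient f x, p⟫ = ‖p‖ ^ 2 := by
    simpa only [RCLike.re_to_real, real_inner_comm, Submodule.coe_norm,
      ← K.starProjection_apply] using
      K.re_inner_starProjection_eq_normSq (gradient f y - gradient f x)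
  have hinner : ⟪gradient f y - gradient f x, w - y⟫ = -(ρ⁻¹ * ‖p‖ ^ 2) := by
    rw [hwy, inner_neg_right, real_inner_smul_right, hp]
  have hnonneg := hconv.bregmanDiv_nonneg hx hw hdiff
  have hupper := hsmooth w hw y hy
  rw [bregmanDiv_three_point f x y w, hinner] at hnonneg
  rw [hnorm] at hupper
  calc ‖p‖ ^ 2 = 2 * ρ * (ρ⁻¹ * ‖p‖ ^ 2 - ρ / 2 * (ρ⁻¹ ^ 2 * ‖p‖ ^ 2)) := by field_simp; ring
    _ ≤ 2 * ρ * bregmanDiv f x y := by gcongr; linarith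

end Bregman

theorem stmt_8 (n : ℕ) (f : EuclideanSpace ℝ (Fin n) → ℝ)
    (hconv : ConvexOn ℝ Set.univ f) (hdiff : Differentiable ℝ f)
    (U : Submodule ℝ (EuclideanSpace ℝ (Fin n)))
    (P : EuclideanSpace ℝ (Fin n) → EuclideanSpace ℝ (Fin n))
    (hP : P = fun v => (Submodule.orthogonalProjectionOnto U v : EuclideanSpace ℝ (Fin n)))
    (ρ : ℝ) (hρ : 0 < ρ)
    (hsmooth : ∀ w₁ ∈ U, ∀ w₂ ∈ U,
      f w₁ - f w₂ - ⟪gradient f w₂, w₁ - w₂⟫ ≤ (ρ / 2) * ‖w₁ - w₂‖ ^ 2) :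
    ∀ x ∈ U, ∀ x' ∈ U,
      ‖P (gradient f x' - gradient f x)‖ ^ 2
        ≤ ρ * ⟪x' - x, gradient f x' - gradient f x⟫ := by
  intro x hx x' hx'
  subst hP
  have hconvU : ConvexOn ℝ U f := hconv.subset (Set.subset_univ _) U.convex
  have h₁ := norm_sq_starProjection_gradient_sub_le hρ hconvU (hdiff x) hsmooth hx hx'
  have h₂ := norm_sq_starProjection_gradient_sub_le hρ hconvU (hdiff x') hsmooth hx' hx
  rw [← neg_sub, map_neg, norm_neg] at h₂
  rw [← bregmanDiv_add_bregmanDiv_swap]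
  change ‖U.starProjection (gradient f x' - gradient f x)‖ ^ 2 ≤ _
  linarith
end

section
/- (Second key contraction bound, Lemma 1b) With the same setup, assume (i) ⟨x'-x, ∇F(x') - ∇F(x)⟩ ≥ ρ⁻ ‖x'-x‖² and (ii) ‖∇f_i(x') - ∇f_i(x)‖ ≤ ρ⁺ ‖x' - x‖ for each i. Then E_i ‖x' - x - (μ/(M p(i))) (∇f_i(x') - ∇f_i(x))‖² ≤ (1 + μ² α ρ⁺ - 2μ ρ⁻) ‖x' - x‖², where α = max_i ρ⁺/(M p(i)). -/
open scoped RealInnerProductSpace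
open Finset

/-!
Expanding the square, the weight `p i` cancels against the step `μ / (M p i)` in the cross
term, which becomes `2μ ⟪x' - x, ∇F x' - ∇F x⟫ ≥ 2μρ⁻ ‖x' - x‖²`. The quadratic term is
`∑ μ² / (M² p i) ‖∇f_i x' - ∇f_i x‖² ≤ ∑ (μ²ρ⁺ / M) (ρ⁺ / (M p i)) ‖x' - x‖² ≤ μ² α ρ⁺ ‖x' - x‖²`.
-/

theorem gradient_const_mul_sum {ι F : Type*} [NormedAddCommGroup F] [InnerProductSpace ℝ F]
    [CompleteSpace F] (s : Finset ι) (f : ι → F → ℝ) (c : ℝ) {y : F}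
    (hf : ∀ i ∈ s, DifferentiableAt ℝ (f i) y) :
    gradient (fun x => c * ∑ i ∈ s, f i x) y = c • ∑ i ∈ s, gradient (f i) y := by
  have hfderiv : fderiv ℝ (fun x => c * ∑ i ∈ s, f i x) y = c • ∑ i ∈ s, fderiv ℝ (f i) y := by
    rw [fderiv_const_mul (DifferentiableAt.fun_sum hf), fderiv_fun_sum hf]
  simp only [gradient, hfderiv, map_smul, map_sum]

theorem sum_mul_norm_sub_smul_sq {ι E : Type*} [Fintype ι] [NormedAddCommGroup E]
    [InnerProductSpace ℝ E] (p c : ι → ℝ) (hp : ∑ i, p i = 1) (d : E) (g : ι → E) :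
    ∑ i, p i * ‖d - c i • g i‖ ^ 2
      = ‖d‖ ^ 2 - 2 * ∑ i, p i * c i * ⟪d, g i⟫ + ∑ i, p i * c i ^ 2 * ‖g i‖ ^ 2 := by
  calc ∑ i, p i * ‖d - c i • g i‖ ^ 2
      = ∑ i, (p i * ‖d‖ ^ 2 - 2 * (p i * c i * ⟪d, g i⟫) + p i * c i ^ 2 * ‖g i‖ ^ 2) := by
        refine sum_congr rfl fun i _ => ?_
        rw [norm_sub_sq_real, inner_smul_right, norm_smul, mul_pow, Real.norm_eq_abs, sq_abs]
        ring
    _ = _ := by rw [sum_add_distrib, sum_sub_distrib, ← sum_mul, hp, ← mul_sum, one_mul]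

theorem sum_mul_div_card_mul_sq_mul_le {ι : Type*} [Fintype ι] [Nonempty ι] (p : ι → ℝ)
    (hp : ∀ i, 0 < p i) (μ : ℝ) {L α r : ℝ} (hL : 0 ≤ L)
    (hα : ∀ i, L / (Fintype.card ι * p i) ≤ α) (a : ι → ℝ) (ha : ∀ i, a i ≤ (L * r) ^ 2) :
    ∑ i, p i * (μ / (Fintype.card ι * p i)) ^ 2 * a i ≤ μ ^ 2 * α * L * r ^ 2 := by
  set N : ℝ := (Fintype.card ι : ℝ)
  have hN : 0 < N := Nat.cast_pos.mpr Fintype.card_pos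
  have hterm : ∀ i, p i * (μ / (N * p i)) ^ 2 * a i ≤ μ ^ 2 * α * L * r ^ 2 / N := by
    intro i
    have hpi := hp i
    calc p i * (μ / (N * p i)) ^ 2 * a i ≤ p i * (μ / (N * p i)) ^ 2 * (L * r) ^ 2 := by
          gcongr; exact ha i
      _ = μ ^ 2 * L * r ^ 2 / N * (L / (N * p i)) := by field_simp
      _ ≤ μ ^ 2 * L * r ^ 2 / N * α := by gcongr; exact hα i
      _ = μ ^ 2 * α * L * r ^ 2 / N := by ring
  calc ∑ i, p i * (μ / (N * p i)) ^ 2 * a i ≤ ∑ _i : ι, μ ^ 2 * α * L * r ^ 2 / N :=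
        sum_le_sum fun i _ => hterm i
    _ = μ ^ 2 * α * L * r ^ 2 := by
        rw [sum_const, card_univ, nsmul_eq_mul]
        exact mul_div_cancel₀ _ hN.ne'

theorem stmt_13_general (M n : ℕ) (hM : 0 < M) (p : Fin M → ℝ) (hp : ∀ i, 0 < p i)
    (hsum : ∑ i, p i = 1)
    (f : Fin M → EuclideanSpace ℝ (Fin n) → ℝ)
    (hdiff : ∀ i, Differentiable ℝ (f i))
    (F : EuclideanSpace ℝ (Fin n) → ℝ)
    (hF : F = fun x => (1 / (M : ℝ)) * ∑ i, f i x)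
    (x x' : EuclideanSpace ℝ (Fin n))
    (ρm ρp μ α : ℝ) (hρp : 0 < ρp) (hμ : 0 < μ)
    (hα : IsGreatest (Set.range fun i => ρp / ((M : ℝ) * p i)) α)
    (hsc : ⟪x' - x, gradient F x' - gradient F x⟫ ≥ ρm * ‖x' - x‖ ^ 2)
    (hlip : ∀ i, ‖gradient (f i) x' - gradient (f i) x‖ ≤ ρp * ‖x' - x‖) :
    ∑ i, p i * ‖x' - x - (μ / ((M : ℝ) * p i)) •
        (gradient (f i) x' - gradient (f i) x)‖ ^ 2
      ≤ (1 + μ ^ 2 * α * ρp - 2 * μ * ρm) * ‖x' - x‖ ^ 2 := by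
  have : Nonempty (Fin M) := ⟨⟨0, hM⟩⟩
  set d := x' - x
  set g := fun i => gradient (f i) x' - gradient (f i) x
  have hgradF : gradient F x' - gradient F x = (1 / (M : ℝ)) • ∑ i, g i := by
    rw [hF, gradient_const_mul_sum _ _ _ fun i _ => hdiff i x',
      gradient_const_mul_sum _ _ _ fun i _ => hdiff i x, ← smul_sub, ← sum_sub_distrib]
  have hcross : μ * ρm * ‖d‖ ^ 2 ≤ ∑ i, p i * (μ / (M * p i)) * ⟪d, g i⟫ := by
    have hweight : ∀ i, p i * (μ / (M * p i)) = μ / M := fun i => by field_simp [(hp i).ne']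
    calc μ * ρm * ‖d‖ ^ 2 ≤ μ * ⟪d, gradient F x' - gradient F x⟫ := by
          rw [mul_assoc]; exact mul_le_mul_of_nonneg_left hsc hμ.le
      _ = _ := by
          rw [hgradF, inner_smul_right, inner_sum, ← mul_assoc, mul_sum]
          refine sum_congr rfl fun i _ => ?_
          rw [hweight]
          ring
  have hquad := sum_mul_div_card_mul_sq_mul_le p hp μ hρp.le
    (fun i => by simpa using hα.2 ⟨i, rfl⟩) (fun i => ‖g i‖ ^ 2)
    (fun i => pow_le_pow_left₀ (norm_nonneg _) (hlip i) 2)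
  rw [Fintype.card_fin] at hquad
  rw [sum_mul_norm_sub_smul_sq p _ hsum]
  linarith

theorem stmt_13 (M n : ℕ) (hM : 0 < M) (p : Fin M → ℝ) (hp : ∀ i, 0 < p i)
    (hsum : ∑ i, p i = 1)
    (f : Fin M → EuclideanSpace ℝ (Fin n) → ℝ)
    (hdiff : ∀ i, Differentiable ℝ (f i))
    (F : EuclideanSpace ℝ (Fin n) → ℝ)
    (hF : F = fun x => (1 / (M : ℝ)) * ∑ i, f i x)
    (x x' : EuclideanSpace ℝ (Fin n))
    (ρm ρp μ α : ℝ) (hρm : 0 < ρm) (hρp : 0 < ρp) (hμ : 0 < μ)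
    (hα : IsGreatest (Set.range fun i => ρp / ((M : ℝ) * p i)) α)
    (hsc : ⟪x' - x, gradient F x' - gradient F x⟫ ≥ ρm * ‖x' - x‖ ^ 2)
    (hlip : ∀ i, ‖gradient (f i) x' - gradient (f i) x‖ ≤ ρp * ‖x' - x‖) :
    ∑ i, p i * ‖x' - x - (μ / ((M : ℝ) * p i)) •
        (gradient (f i) x' - gradient (f i) x)‖ ^ 2
      ≤ (1 + μ ^ 2 * α * ρp - 2 * μ * ρm) * ‖x' - x‖ ^ 2 :=
  stmt_13_general M n hM p hp hsum f hdiff F hF x x' ρm ρp μ α hρp hμ hα hsc hlip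
end
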